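/- arXiv:2409.14903 — 5 statements merged into one kernel-verified Lean document; each statement's English description precedes it below -/
import Mathlib

section
/- For fixed g, b > 0 and each nonnegative integer m, the function f_m defined by the Dirichlet series f_m(x) = Σ_{n≥0} c_n exp(-(b/g)·2^{n+1-m}·x), with c_0 = 1 and c_n = (-1)^n 2^{n(m+1)}/∏_{j=1}^n(2^j-1), satisfies the functional-differential equation -g·f_m'(x) - b·f_m(x) + 4b·f_m(2x) = (2^{1-m} - 1)·b·f_m(x) for all x > 0. -/
/-- The Dirichlet series `f_m` satisfies `-g f_m' - b f_m + 4 b f_m(2·) = λ_m f_m`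
on `(0, ∞)`, where `λ_m = (2^(1-m) - 1) b`. -/
theorem stmt_4 (g b : ℝ) (hg : 0 < g) (hb : 0 < b) (m : ℕ)
    (c : ℕ → ℝ)
    (hc : ∀ n : ℕ, c n = (-1 : ℝ) ^ n * 2 ^ (n * (m + 1)) /
      ∏ j ∈ Finset.Icc 1 n, ((2 : ℝ) ^ j - 1))
    (f : ℝ → ℝ)
    (hf : ∀ x : ℝ, f x = ∑' n : ℕ,
      c n * Real.exp (-(b / g) * (2 : ℝ) ^ ((n : ℤ) + 1 - (m : ℤ)) * x)) :
    ∀ x > (0 : ℝ), DifferentiableAt ℝ f x ∧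
      -g * deriv f x - b * f x + 4 * b * f (2 * x) =
        ((2 : ℝ) ^ ((1 : ℤ) - (m : ℤ)) - 1) * b * f x := by
  have h2 : (2 : ℝ) ≠ 0 := two_ne_zero
  set μ : ℕ → ℝ := fun n => (b / g) * (2 : ℝ) ^ ((n : ℤ) + 1 - (m : ℤ)) with hμdef
  have hμpos : ∀ n, 0 < μ n := fun n => mul_pos (div_pos hb hg) (zpow_pos two_pos _)
  have hμsucc : ∀ n, μ (n + 1) = 2 * μ n := by
    intro n
    have he : ((n + 1 : ℕ) : ℤ) + 1 - (m : ℤ) = ((n : ℤ) + 1 - (m : ℤ)) + 1 := by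
      push_cast; ring
    simp only [hμdef, he, zpow_add₀ h2, zpow_one]; ring
  have hprodpos : ∀ n : ℕ, 0 < ∏ j ∈ Finset.Icc 1 n, ((2 : ℝ) ^ j - 1) := by
    intro n
    apply Finset.prod_pos
    intro j hj
    have h1j : 1 ≤ j := (Finset.mem_Icc.mp hj).1
    have : (2 : ℝ) ^ 1 ≤ 2 ^ j := pow_le_pow_right₀ one_le_two h1j
    norm_num at this; linarith
  have hpow1 : ∀ n : ℕ, (0 : ℝ) < 2 ^ (n + 1) - 1 := by
    intro n
    have : (2 : ℝ) ^ 1 ≤ 2 ^ (n + 1) := pow_le_pow_right₀ one_le_two (by omega)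
    norm_num at this; linarith
  have hrec : ∀ n : ℕ, c (n + 1) * ((2 : ℝ) ^ (n + 1) - 1) = -(c n) * 2 ^ (m + 1) := by
    intro n
    rw [hc, hc, Finset.prod_Icc_succ_top (Nat.le_add_left 1 n)]
    have hP := (hprodpos n).ne'
    have hQ := (hpow1 n).ne'
    field_simp
    ring
  have hcabs : ∀ n : ℕ, |c (n + 1)| * ((2 : ℝ) ^ (n + 1) - 1) = |c n| * 2 ^ (m + 1) := by
    intro n
    have h := congrArg abs (hrec n)
    rw [abs_mul, abs_mul, abs_neg, abs_of_pos (hpow1 n),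
      abs_of_pos (by positivity : (0:ℝ) < 2 ^ (m + 1))] at h
    exact h
  have hcratio : ∀ n : ℕ, m + 3 ≤ n → |c (n + 1)| ≤ (1 / 4) * |c n| := by
    intro n hn
    have h16 : (2 : ℝ) ^ (m + 4) ≤ 2 ^ (n + 1) := pow_le_pow_right₀ one_le_two (by omega)
    have h8 : (2 : ℝ) ^ (m + 4) = 8 * 2 ^ (m + 1) := by ring
    have h1m : (1 : ℝ) ≤ 2 ^ (m + 1) := one_le_pow₀ one_le_two
    have hQ := hpow1 n
    have habs := hcabs n
    nlinarith [abs_nonneg (c (n + 1)), abs_nonneg (c n)]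
  have Sc : Summable fun n => |c n| := by
    apply summable_of_ratio_norm_eventually_le (r := 1 / 2) (by norm_num)
    filter_upwards [Filter.eventually_ge_atTop (m + 3)] with n hn
    have h := hcratio n hn
    simp only [Real.norm_eq_abs, abs_abs]
    nlinarith [abs_nonneg (c n)]
  have Su : Summable fun n => |c n| * μ n := by
    apply summable_of_ratio_norm_eventually_le (r := 1 / 2) (by norm_num)
    filter_upwards [Filter.eventually_ge_atTop (m + 3)] with n hn
    have h1 := hcratio n hn
    have h2' := hμsucc n
    have h3 := (hμpos n).le
    simp only [Real.norm_eq_abs]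
    rw [abs_of_nonneg (mul_nonneg (abs_nonneg _) (hμpos _).le),
      abs_of_nonneg (mul_nonneg (abs_nonneg _) (hμpos n).le), h2']
    nlinarith [abs_nonneg (c n)]
  have hfeq : ∀ y : ℝ, f y = ∑' n, c n * Real.exp (-(μ n) * y) := by
    intro y
    rw [hf y]
    exact tsum_congr fun n => by
      rw [show -(b / g) * (2 : ℝ) ^ ((n : ℤ) + 1 - (m : ℤ)) * y = -(μ n) * y by
        simp only [hμdef]; ring]
  intro x hx
  have hexp_le : ∀ (n : ℕ) (y : ℝ), 0 ≤ y → Real.exp (-(μ n) * y) ≤ 1 := by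
    intro n y hy
    rw [Real.exp_le_one_iff]
    have := (hμpos n).le
    nlinarith
  have hSf : ∀ y : ℝ, 0 ≤ y → Summable fun n => c n * Real.exp (-(μ n) * y) := by
    intro y hy
    apply Summable.of_norm_bounded Sc
    intro n
    rw [Real.norm_eq_abs, abs_mul, abs_of_pos (Real.exp_pos _)]
    nlinarith [abs_nonneg (c n), hexp_le n y hy, (Real.exp_pos (-(μ n) * y)).le]
  have hder0 : ∀ (n : ℕ) (y : ℝ),
      HasDerivAt (fun z => c n * Real.exp (-(μ n) * z))
        (c n * (Real.exp (-(μ n) * y) * (-(μ n) * 1))) y := by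
    intro n y
    exact (((hasDerivAt_id y).const_mul (-(μ n))).exp).const_mul (c n)
  have hbound : ∀ (n : ℕ), ∀ y ∈ Set.Ioi (0 : ℝ),
      ‖c n * (Real.exp (-(μ n) * y) * (-(μ n) * 1))‖ ≤ |c n| * μ n := by
    intro n y hy
    rw [Real.norm_eq_abs, abs_mul, abs_mul, abs_mul, abs_one, mul_one,
      abs_of_pos (Real.exp_pos _), abs_neg, abs_of_pos (hμpos n)]
    have h5 : Real.exp (-(μ n) * y) * μ n ≤ μ n := by
      nlinarith [hexp_le n y (le_of_lt hy), (hμpos n).le]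
    exact mul_le_mul_of_nonneg_left h5 (abs_nonneg _)
  have hderiv : HasDerivAt f (∑' n, c n * (Real.exp (-(μ n) * x) * (-(μ n) * 1))) x := by
    have h := hasDerivAt_tsum_of_isPreconnected Su isOpen_Ioi isPreconnected_Ioi
      (fun n y _ => hder0 n y) hbound (Set.mem_Ioi.mpr hx)
      (hSf x hx.le) (Set.mem_Ioi.mpr hx)
    exact h.congr_of_eventuallyEq (Filter.Eventually.of_forall fun z => hfeq z)
  refine ⟨hderiv.differentiableAt, ?_⟩
  rw [hderiv.deriv, hfeq x, hfeq (2 * x)]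
  set lam : ℝ := ((2 : ℝ) ^ ((1 : ℤ) - (m : ℤ)) - 1) * b with hlam
  have hEshift : ∀ n : ℕ, Real.exp (-(μ n) * (2 * x)) = Real.exp (-(μ (n + 1)) * x) := by
    intro n
    rw [hμsucc n]; congr 1; ring
  have hgμ : ∀ n : ℕ, g * μ n = b * (2 : ℝ) ^ ((n : ℤ) + 1 - (m : ℤ)) := by
    intro n
    simp only [hμdef]
    field_simp
  have hw : ∀ n : ℕ, (lam + b) * c (n + 1) - g * μ (n + 1) * c (n + 1) = 4 * b * c n := by
    intro n
    have h1 : g * μ (n + 1) = b * ((2 : ℝ) ^ ((1 : ℤ) - (m : ℤ)) * 2 ^ (n + 1)) := by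
      rw [hgμ (n + 1)]
      congr 1
      rw [← zpow_natCast (2 : ℝ) (n + 1), ← zpow_add₀ h2]
      congr 1
      push_cast; ring
    have h4 : (2 : ℝ) ^ ((1 : ℤ) - (m : ℤ)) * 2 ^ (m + 1) = 4 := by
      rw [← zpow_natCast (2 : ℝ) (m + 1), ← zpow_add₀ h2]
      have he : (1 : ℤ) - (m : ℤ) + ((m + 1 : ℕ) : ℤ) = 2 := by push_cast; ring
      rw [he]; norm_num
    have hr := hrec n
    have hstep : (lam + b) * c (n + 1) - g * μ (n + 1) * c (n + 1)
        = -(b * (2 : ℝ) ^ ((1 : ℤ) - (m : ℤ))) * (c (n + 1) * ((2 : ℝ) ^ (n + 1) - 1)) := by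
      rw [h1, hlam]; ring
    rw [hstep, hr]
    linear_combination b * c n * h4
  have hw0 : (lam + b) * c 0 - g * μ 0 * c 0 = 0 := by
    have h1 : g * μ 0 = b * (2 : ℝ) ^ ((1 : ℤ) - (m : ℤ)) := by
      rw [hgμ 0]; norm_num
    rw [h1, hlam]; ring
  -- summability facts at x
  have hEb : ∀ (a : ℝ) (n : ℕ), |a * Real.exp (-(μ n) * x)| ≤ |a| := by
    intro a n
    rw [abs_mul, abs_of_pos (Real.exp_pos _)]
    nlinarith [abs_nonneg a, hexp_le n x hx.le, (Real.exp_pos (-(μ n) * x)).le]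
  have SA : Summable fun n => (g * μ n * c n) * Real.exp (-(μ n) * x) := by
    apply Summable.of_norm_bounded (g := fun n => g * (|c n| * μ n)) (Su.mul_left g)
    intro n
    refine le_trans (hEb _ n) (le_of_eq ?_)
    rw [abs_mul, abs_mul, abs_of_pos hg, abs_of_pos (hμpos n)]; ring
  have SB : Summable fun n => (b * c n) * Real.exp (-(μ n) * x) := by
    apply Summable.of_norm_bounded (g := fun n => b * |c n|) (Sc.mul_left b)
    intro n
    refine le_trans (hEb _ n) (le_of_eq ?_)
    rw [abs_mul, abs_of_pos hb]
  have SW : Summable fun n =>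
      ((lam + b) * c n - g * μ n * c n) * Real.exp (-(μ n) * x) := by
    apply Summable.of_norm_bounded (g := fun n => (|lam| + b) * |c n| + g * (|c n| * μ n))
      ((Sc.mul_left _).add (Su.mul_left g))
    intro n
    refine le_trans (hEb _ n) ?_
    have t1 := abs_add_le ((lam + b) * c n) (-(g * μ n * c n))
    rw [abs_neg] at t1
    have t2 : (lam + b) * c n + -(g * μ n * c n) = (lam + b) * c n - g * μ n * c n := by ring
    rw [t2] at t1
    have t3 : |(lam + b) * c n| ≤ (|lam| + b) * |c n| := by
      rw [abs_mul]
      have := abs_add_le lam b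
      rw [abs_of_pos hb] at this
      nlinarith [abs_nonneg (c n), abs_nonneg (lam + b)]
    have t4 : |g * μ n * c n| = g * (|c n| * μ n) := by
      rw [abs_mul, abs_mul, abs_of_pos hg, abs_of_pos (hμpos n)]; ring
    linarith
  -- push scalars inside the tsums
  have e1 : -g * (∑' n, c n * (Real.exp (-(μ n) * x) * (-(μ n) * 1)))
      = ∑' n, (g * μ n * c n) * Real.exp (-(μ n) * x) := by
    rw [← tsum_mul_left]
    exact tsum_congr fun n => by ring
  have e2 : b * (∑' n, c n * Real.exp (-(μ n) * x))
      = ∑' n, (b * c n) * Real.exp (-(μ n) * x) := by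
    rw [← tsum_mul_left]
    exact tsum_congr fun n => by ring
  have e3 : 4 * b * (∑' n, c n * Real.exp (-(μ n) * (2 * x)))
      = ∑' n, (4 * b * c n) * Real.exp (-(μ (n + 1)) * x) := by
    rw [← tsum_mul_left]
    exact tsum_congr fun n => by rw [hEshift n]; ring
  have e4 : lam * (∑' n, c n * Real.exp (-(μ n) * x))
      = ∑' n, (lam * c n) * Real.exp (-(μ n) * x) := by
    rw [← tsum_mul_left]
    exact tsum_congr fun n => by ring
  have main : (∑' n, (4 * b * c n) * Real.exp (-(μ (n + 1)) * x))
      = ∑' n, ((lam + b) * c n - g * μ n * c n) * Real.exp (-(μ n) * x) := by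
    rw [Summable.tsum_eq_zero_add SW, hw0, zero_mul, zero_add]
    exact tsum_congr fun n => by rw [hw n]
  rw [e1, e2, e3, e4, main, ← Summable.tsum_sub SA SB, ← Summable.tsum_add (SA.sub SB) SW]
  exact tsum_congr fun n => by ring
end

section
/- The function f_0(x) = Σ_{n≥0} (-1)^n · 2^n · exp(-(b/g)·2^{n+1}·x) / ∏_{j=1}^n (2^j - 1) satisfies the steady-state equation g·f_0'(x) + 2b·f_0(x) = 4b·f_0(2x) for all x > 0. -/
/-- The steady size distribution `f_0` satisfies `g f_0' + 2 b f_0 = 4 b f_0(2·)`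
on `(0, ∞)`. -/
theorem stmt_6 (g b : ℝ) (hg : 0 < g) (hb : 0 < b)
    (c : ℕ → ℝ)
    (hc : ∀ n : ℕ, c n = (-1 : ℝ) ^ n * 2 ^ n /
      ∏ j ∈ Finset.Icc 1 n, ((2 : ℝ) ^ j - 1))
    (f : ℝ → ℝ)
    (hf : ∀ x : ℝ, f x = ∑' n : ℕ, c n * Real.exp (-(b / g) * 2 ^ (n + 1) * x)) :
    ∀ x > (0 : ℝ), DifferentiableAt ℝ f x ∧
      g * deriv f x + 2 * b * f x = 4 * b * f (2 * x) := by
  have hbg : 0 < b / g := div_pos hb hg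
  set k : ℕ → ℝ := fun n => -(b / g) * 2 ^ (n + 1) with hk
  have hkneg : ∀ n, k n < 0 := fun n => by
    have : (0:ℝ) < 2 ^ (n+1) := by positivity
    simp only [hk]; nlinarith
  have hkabs : ∀ n, |k n| = (b / g) * 2 ^ (n + 1) := fun n => by
    rw [abs_of_neg (hkneg n)]; simp [hk]
  -- product positivity
  have hprod : ∀ n : ℕ, 0 < ∏ j ∈ Finset.Icc 1 n, ((2 : ℝ) ^ j - 1) := by
    intro n
    apply Finset.prod_pos
    intro j hj
    have hj1 : 1 ≤ j := (Finset.mem_Icc.1 hj).1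
    have : (2:ℝ) ≤ 2 ^ j := by
      calc (2:ℝ) = 2 ^ 1 := (pow_one 2).symm
      _ ≤ 2 ^ j := pow_le_pow_right₀ (by norm_num) hj1
    linarith
  -- recurrence
  have crec : ∀ n : ℕ, c (n + 1) * ((2:ℝ) ^ (n + 1) - 1) = -2 * c n := by
    intro n
    have hP := hprod n
    have hd : (0:ℝ) < 2 ^ (n+1) - 1 := by
      have : (2:ℝ) ≤ 2 ^ (n+1) := by
        calc (2:ℝ) = 2 ^ 1 := (pow_one 2).symm
        _ ≤ 2 ^ (n+1) := pow_le_pow_right₀ (by norm_num) (by omega)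
      linarith
    rw [hc, hc, Finset.prod_Icc_succ_top (by omega : 1 ≤ n + 1)]
    field_simp
    ring
  have cabs : ∀ n : ℕ, |c (n + 1)| * ((2:ℝ) ^ (n + 1) - 1) = 2 * |c n| := by
    intro n
    have hd : (0:ℝ) < 2 ^ (n+1) - 1 := by
      have : (2:ℝ) ≤ 2 ^ (n+1) := by
        calc (2:ℝ) = 2 ^ 1 := (pow_one 2).symm
        _ ≤ 2 ^ (n+1) := pow_le_pow_right₀ (by norm_num) (by omega)
      linarith
    have := congrArg abs (crec n)
    rwa [abs_mul, abs_of_pos hd, abs_mul, abs_of_neg (by norm_num : (-2:ℝ) < 0),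
      neg_neg] at this
  -- summability of the majorant
  have hv : Summable (fun n : ℕ => |c n| * 2 ^ (n + 1)) := by
    apply summable_of_ratio_norm_eventually_le (r := 1/2) (by norm_num)
    filter_upwards [Filter.eventually_ge_atTop 3] with n hn
    have h16 : (16:ℝ) ≤ 2 ^ (n + 1) := by
      calc (16:ℝ) = 2 ^ 4 := by norm_num
      _ ≤ 2 ^ (n+1) := pow_le_pow_right₀ (by norm_num) (by omega)
    have hA := abs_nonneg (c (n+1))
    have hB := abs_nonneg (c n)
    have hcb := cabs n
    have h1 : ‖|c (n+1)| * (2:ℝ) ^ (n + 1 + 1)‖ = |c (n+1)| * 2 ^ (n + 1 + 1) := by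
      rw [Real.norm_eq_abs, abs_of_nonneg (by positivity)]
    have h2 : ‖|c n| * (2:ℝ) ^ (n + 1)‖ = |c n| * 2 ^ (n + 1) := by
      rw [Real.norm_eq_abs, abs_of_nonneg (by positivity)]
    rw [h1, h2]
    have hpow : (2:ℝ) ^ (n + 1 + 1) = 2 * 2 ^ (n + 1) := by ring
    rw [hpow]
    nlinarith [mul_nonneg hA (by linarith : (0:ℝ) ≤ 2 ^ (n+1) - 16)]
  have hu : Summable (fun n : ℕ => (b / g) * (|c n| * 2 ^ (n + 1))) := hv.mul_left _
  -- the terms and their derivatives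
  set F : ℕ → ℝ → ℝ := fun n y => c n * Real.exp (k n * y) with hF
  set D : ℕ → ℝ → ℝ := fun n y => c n * k n * Real.exp (k n * y) with hD
  have hderiv : ∀ n y, HasDerivAt (F n) (D n y) y := by
    intro n y
    have h := (((hasDerivAt_id y).const_mul (k n)).exp).const_mul (c n)
    convert h using 1
    · rfl
    · rfl
    · simp [hD]; ring
    simp [hD]; ring
  have hfF : ∀ y, f y = ∑' n, F n y := fun y => hf y
  intro x hx
  set t : Set ℝ := Set.Ioi (x / 2) with ht
  have hxt : x ∈ t := by simp [ht]; linarith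
  have hbound : ∀ n, ∀ y ∈ t, ‖D n y‖ ≤ (b / g) * (|c n| * 2 ^ (n + 1)) := by
    intro n y hy
    have hy0 : 0 < y := lt_trans (by linarith) hy
    have hexp : Real.exp (k n * y) ≤ 1 := by
      apply Real.exp_le_one_iff.2
      exact le_of_lt (mul_neg_of_neg_of_pos (hkneg n) hy0)
    have hexp0 : 0 ≤ Real.exp (k n * y) := Real.exp_nonneg _
    calc ‖D n y‖ = |c n| * |k n| * Real.exp (k n * y) := by
          simp [hD, abs_mul, abs_of_nonneg hexp0]
      _ ≤ |c n| * |k n| * 1 := by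
          apply mul_le_mul_of_nonneg_left hexp (by positivity)
      _ = (b / g) * (|c n| * 2 ^ (n + 1)) := by rw [hkabs]; ring
  -- summability of F at x
  have hFx : ∀ y : ℝ, 0 < y → Summable (fun n => F n y) := by
    intro y hy0
    apply Summable.of_norm_bounded hv
    intro n
    have hexp : Real.exp (k n * y) ≤ 1 := by
      apply Real.exp_le_one_iff.2
      exact le_of_lt (mul_neg_of_neg_of_pos (hkneg n) hy0)
    have hexp0 : 0 ≤ Real.exp (k n * y) := Real.exp_nonneg _
    calc ‖F n y‖ = |c n| * Real.exp (k n * y) := by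
          simp [hF, abs_mul, abs_of_nonneg hexp0]
      _ ≤ |c n| * 1 := mul_le_mul_of_nonneg_left hexp (abs_nonneg _)
      _ ≤ |c n| * 2 ^ (n + 1) := by
          apply mul_le_mul_of_nonneg_left _ (abs_nonneg _)
          have : (1:ℝ) ≤ 2 ^ (n+1) := one_le_pow₀ (by norm_num)
          linarith
  have hder : HasDerivAt f (∑' n, D n x) x := by
    have h := hasDerivAt_tsum_of_isPreconnected hu isOpen_Ioi
      (isPreconnected_Ioi) (fun n y _ => hderiv n y) hbound hxt (hFx x hx) hxt
    have : f = fun z => ∑' n, F n z := funext hfF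
    rw [this]
    exact h
  refine ⟨hder.differentiableAt, ?_⟩
  rw [hder.deriv]
  -- summabilities for the algebra
  have hSD : Summable (fun n => D n x) := by
    apply Summable.of_norm_bounded hu
    intro n; exact hbound n x hxt
  have hSF : Summable (fun n => F n x) := hFx x hx
  set h : ℕ → ℝ := fun n => 2 * b * c n * (1 - 2 ^ n) * Real.exp (k n * x) with hh
  have hterm : ∀ n, g * D n x + 2 * b * F n x = h n := by
    intro n
    simp only [hD, hF, hh, hk]
    have hgn : g ≠ 0 := ne_of_gt hg
    field_simp
    ring
  have hSh : Summable h := by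
    apply Summable.congr ((hSD.mul_left g).add (hSF.mul_left (2 * b)))
    intro n
    exact hterm n
  have hstep : ∀ m : ℕ, h (m + 1) = 4 * b * F m (2 * x) := by
    intro m
    have hcr := crec m
    have hk2 : k (m + 1) * x = k m * (2 * x) := by
      simp only [hk]; ring
    simp only [hh, hF, hk2]
    linear_combination (-2 * b * Real.exp (k m * (2 * x))) * hcr
  rw [hfF x]
  calc g * (∑' n, D n x) + 2 * b * ∑' n, F n x
      = (∑' n, g * D n x) + ∑' n, 2 * b * F n x := by
        rw [tsum_mul_left, tsum_mul_left]
    _ = ∑' n, (g * D n x + 2 * b * F n x) :=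
        (Summable.tsum_add (hSD.mul_left g) (hSF.mul_left (2 * b))).symm
    _ = ∑' n, h n := tsum_congr hterm
    _ = h 0 + ∑' m, h (m + 1) := Summable.tsum_eq_zero_add hSh
    _ = ∑' m, h (m + 1) := by
        have : h 0 = 0 := by simp [hh]
        rw [this, zero_add]
    _ = ∑' m, 4 * b * F m (2 * x) := tsum_congr hstep
    _ = 4 * b * ∑' m, F m (2 * x) := tsum_mul_left
    _ = 4 * b * f (2 * x) := by rw [← hfF]
end

section
/- For integers 0 ≤ p < m, the sum Σ_{n≥0} (-1)^n · 2^{n(m-p)} / ∏_{j=1}^n (2^j - 1) equals 0; equivalently, the p-th moment ∫_0^∞ x^p f_m(x) dx vanishes for p < m. -/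
open Real MeasureTheory Set

noncomputable def myD (n : ℕ) : ℝ := ∏ j ∈ Finset.Icc 1 n, ((2 : ℝ) ^ j - 1)

lemma two_pow_sub_one_pos {k : ℕ} (hk : 1 ≤ k) : (0:ℝ) < 2 ^ k - 1 := by
  have h : (2:ℝ)^1 ≤ 2^k := pow_le_pow_right₀ one_le_two hk
  norm_num at h; linarith

lemma myD_pos (n : ℕ) : 0 < myD n :=
  Finset.prod_pos fun j hj => two_pow_sub_one_pos (Finset.mem_Icc.mp hj).1

lemma myD_succ (n : ℕ) : myD (n+1) = myD n * ((2:ℝ)^(n+1) - 1) :=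
  Finset.prod_Icc_succ_top (Nat.le_add_left 1 n) _

noncomputable def myA (q : ℝ) (n : ℕ) : ℝ := (-1)^n * q^n / myD n

lemma norm_myA (q : ℝ) (n : ℕ) : ‖myA q n‖ = |q|^n / myD n := by
  rw [myA, norm_div, norm_mul, norm_pow, norm_pow, norm_neg, norm_one, one_pow, one_mul,
    Real.norm_eq_abs, Real.norm_eq_abs, abs_of_pos (myD_pos n)]

lemma summable_myA (q : ℝ) : Summable (myA q) := by
  obtain ⟨N, hN⟩ := pow_unbounded_of_one_lt (2 * |q|) (one_lt_two (α := ℝ))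
  refine summable_of_ratio_norm_eventually_le (r := 1/2) (by norm_num) ?_
  filter_upwards [Filter.eventually_ge_atTop N] with n hn
  rw [norm_myA, norm_myA, myD_succ]
  have hD := myD_pos n
  have h1 : (0:ℝ) < 2^(n+1) - 1 := two_pow_sub_one_pos (by omega)
  have h2 : (2:ℝ)^N ≤ 2^n := pow_le_pow_right₀ one_le_two hn
  have h4 : (1:ℝ) ≤ 2^n := one_le_pow₀ one_le_two
  have key : 2*|q| ≤ 2^(n+1) - 1 := by
    have h3 : (2:ℝ)^(n+1) = 2^n + 2^n := by ring
    linarith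
  rw [show (1/2:ℝ) * (|q|^n/myD n) = |q|^n/(2*myD n) by ring,
    div_le_div_iff₀ (by positivity) (by positivity), pow_succ]
  have h5 : 0 ≤ |q|^n * myD n := by positivity
  nlinarith [mul_nonneg h5 (by linarith : (0:ℝ) ≤ 2^(n+1)-1-2*|q|), abs_nonneg q]

lemma myD_eq (n : ℕ) : myD n = ∏ j ∈ Finset.Icc 1 n, ((2 : ℝ) ^ j - 1) := rfl

lemma tsum_myA_two_mul (q : ℝ) : ∑' n, myA (2*q) n = (1 - q) * ∑' n, myA q n := by
  have h1 := summable_myA q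
  have h2 := summable_myA (2*q)
  have hF : Summable (fun n => myA (2*q) n - myA q n) := h2.sub h1
  have key : ∀ n, myA (2*q) (n+1) - myA q (n+1) = (-q) * myA q n := by
    intro n
    have hD := (myD_pos n).ne'
    have h2n : ((2:ℝ)^(n+1) - 1) ≠ 0 := (two_pow_sub_one_pos (by omega)).ne'
    simp only [myA, myD_succ]
    field_simp
    ring
  have h0 : myA (2*q) 0 - myA q 0 = 0 := by simp [myA]
  have e1 : ∑' n, (myA (2*q) n - myA q n) = -q * ∑' n, myA q n := by
    rw [Summable.tsum_eq_zero_add hF, h0, zero_add]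
    simp only [key]
    rw [tsum_mul_left]
  rw [Summable.tsum_sub h2 h1] at e1
  linarith [e1]

lemma tsum_myA_zero (r : ℕ) : ∑' n, myA ((2:ℝ)^(r+1)) n = 0 := by
  induction r with
  | zero =>
    have h := tsum_myA_two_mul 1
    norm_num at h
    rw [show ((2:ℝ)^(0+1)) = 2*1 by norm_num]
    rw [tsum_myA_two_mul 1]
    norm_num
  | succ k ih =>
    rw [show ((2:ℝ)^(k+1+1)) = 2*2^(k+1) by ring, tsum_myA_two_mul, ih, mul_zero]

lemma myIntegral {l : ℝ} (hl : 0 < l) (p : ℕ) :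
    ∫ x in Ioi (0:ℝ), x ^ p * Real.exp (-(l * x)) = (1/l)^(p+1) * p.factorial := by
  have h := integral_rpow_mul_exp_neg_mul_Ioi (a := (p:ℝ)+1) (by positivity) hl
  rw [add_sub_cancel_right, Real.Gamma_nat_eq_factorial,
    show ((p:ℝ)+1) = ((p+1:ℕ):ℝ) by push_cast; ring, Real.rpow_natCast] at h
  rw [← h]
  refine setIntegral_congr_fun measurableSet_Ioi fun t _ => ?_
  rw [← Real.rpow_natCast]

lemma myIntegrable {l : ℝ} (hl : 0 < l) (p : ℕ) :
    IntegrableOn (fun x : ℝ => x ^ p * Real.exp (-(l * x))) (Ioi 0) := by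
  have h := integrableOn_rpow_mul_exp_neg_mul_rpow (p := 1) (s := (p:ℝ))
    (by exact_mod_cast neg_one_lt_zero.trans_le (Nat.cast_nonneg p)) one_pos hl
  refine h.congr_fun (fun x _ => ?_) measurableSet_Ioi
  dsimp only
  rw [Real.rpow_one, Real.rpow_natCast, neg_mul]

/-- For `0 ≤ p < m`, `Σ_{n≥0} (-1)^n 2^(n(m-p)) / ∏_{j=1}^n (2^j - 1) = 0`;
equivalently, the `p`-th moment of `f_m` vanishes. -/
theorem stmt_11 (g b : ℝ) (hg : 0 < g) (hb : 0 < b) (m p : ℕ) (hp : p < m)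
    (c : ℕ → ℝ)
    (hc : ∀ n : ℕ, c n = (-1 : ℝ) ^ n * 2 ^ (n * (m + 1)) /
      ∏ j ∈ Finset.Icc 1 n, ((2 : ℝ) ^ j - 1))
    (f : ℝ → ℝ)
    (hf : ∀ x : ℝ, f x = ∑' n : ℕ,
      c n * Real.exp (-(b / g) * (2 : ℝ) ^ ((n : ℤ) + 1 - (m : ℤ)) * x)) :
    (∑' n : ℕ, (-1 : ℝ) ^ n * 2 ^ (n * (m - p)) /
        ∏ j ∈ Finset.Icc 1 n, ((2 : ℝ) ^ j - 1)) = 0 ∧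
      ∫ x in Set.Ioi (0 : ℝ), x ^ p * f x = 0 := by
  obtain ⟨r, hr⟩ : ∃ r, m - p = r + 1 := ⟨m - p - 1, by omega⟩
  constructor
  · have h1 : (∑' n : ℕ, (-1 : ℝ) ^ n * 2 ^ (n * (m - p)) /
        ∏ j ∈ Finset.Icc 1 n, ((2 : ℝ) ^ j - 1)) = ∑' n, myA ((2:ℝ)^(r+1)) n := by
      refine tsum_congr fun n => ?_
      rw [myA, myD_eq, show n*(m-p) = (r+1)*n from by rw [hr]; ring, pow_mul]
    rw [h1, tsum_myA_zero r]
  · -- second part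
    set L : ℕ → ℝ := fun n => b/g * (2:ℝ)^((n:ℤ)+1-(m:ℤ)) with hLdef
    have hL : ∀ n, 0 < L n := fun n => by positivity
    set G : ℕ → ℝ → ℝ :=
      fun n x => x ^ p * (c n * Real.exp (-(b/g) * (2:ℝ)^((n:ℤ)+1-(m:ℤ)) * x)) with hGdef
    have hGeq : ∀ n, G n = fun x => c n * (x^p * Real.exp (-(L n * x))) := by
      intro n; funext x
      simp only [hGdef, hLdef]
      rw [show -(b/g) * (2:ℝ)^((n:ℤ)+1-(m:ℤ)) * x = -((b/g * 2^((n:ℤ)+1-(m:ℤ))) * x) by ring]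
      ring
    have hInt : ∀ n, Integrable (G n) (volume.restrict (Ioi 0)) := by
      intro n; rw [hGeq n]; exact (myIntegrable (hL n) p).const_mul (c n)
    have hval : ∀ n, ∫ x in Ioi (0:ℝ), G n x = c n * ((1/(L n))^(p+1) * (p.factorial:ℝ)) := by
      intro n; rw [hGeq n, integral_const_mul, myIntegral (hL n) p]
    have hnorm : ∀ n, ∫ x in Ioi (0:ℝ), ‖G n x‖
        = |c n| * ((1/(L n))^(p+1) * (p.factorial:ℝ)) := by
      intro n
      rw [hGeq n]
      have hcg : ∀ x ∈ Ioi (0:ℝ), ‖c n * (x^p * Real.exp (-(L n * x)))‖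
          = |c n| * (x^p * Real.exp (-(L n * x))) := by
        intro x hx
        rw [Real.norm_eq_abs, abs_mul, abs_of_nonneg
          (mul_nonneg (pow_nonneg (le_of_lt hx) p) (Real.exp_nonneg _))]
      rw [setIntegral_congr_fun measurableSet_Ioi hcg, integral_const_mul, myIntegral (hL n) p]
    set C : ℝ := (p.factorial : ℝ) * (g/b)^(p+1) * (2:ℝ)^(((m:ℤ)-1)*((p:ℤ)+1)) with hCdef
    have hC : 0 < C := by positivity
    have hLinv : ∀ n, 1/(L n) = (g/b) * (2:ℝ)^((m:ℤ)-(n:ℤ)-1) := by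
      intro n
      rw [hLdef]
      have h2 : ((2:ℝ)^((n:ℤ)+1-(m:ℤ)))⁻¹ = 2^((m:ℤ)-(n:ℤ)-1) := by
        rw [← zpow_neg]; congr 1; ring
      simp only [one_div, mul_inv, h2, inv_div]
    have hterm : ∀ n : ℕ, c n * ((1/(L n))^(p+1) * (p.factorial:ℝ))
        = C * myA ((2:ℝ)^(r+1)) n := by
      intro n
      have hDne := (myD_pos n).ne'
      rw [hc n, myA, ← myD_eq, hLinv n, hCdef, mul_pow,
        ← zpow_natCast ((2:ℝ)^((m:ℤ)-(n:ℤ)-1)), ← zpow_mul,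
        ← pow_mul, show (r+1)*n = n*(m-p) from by rw [hr]; ring,
        show ((2:ℝ)^(n*(m+1)) : ℝ) = (2:ℝ)^((n*(m+1) : ℕ) : ℤ) from (zpow_natCast _ _).symm,
        show ((2:ℝ)^(n*(m-p)) : ℝ) = (2:ℝ)^((n*(m-p) : ℕ) : ℤ) from (zpow_natCast _ _).symm]
      have hexp : (2:ℝ)^((n*(m+1) : ℕ) : ℤ) * 2^(((m:ℤ)-(n:ℤ)-1)*((p+1:ℕ):ℤ))
          = 2^(((m:ℤ)-1)*((p:ℤ)+1)) * 2^((n*(m-p) : ℕ) : ℤ) := by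
        rw [← zpow_add₀ (two_ne_zero), ← zpow_add₀ (two_ne_zero)]
        congr 1
        push_cast [Nat.cast_sub hp.le]
        ring
      calc ((-1:ℝ))^n * 2^((n*(m+1) : ℕ) : ℤ) / myD n
            * ((g/b)^(p+1) * 2^(((m:ℤ)-(n:ℤ)-1)*((p+1:ℕ):ℤ)) * (p.factorial:ℝ))
          = ((-1:ℝ))^n * (g/b)^(p+1) * (p.factorial:ℝ) / myD n
            * ((2:ℝ)^((n*(m+1) : ℕ) : ℤ) * 2^(((m:ℤ)-(n:ℤ)-1)*((p+1:ℕ):ℤ))) := by ring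
        _ = ((-1:ℝ))^n * (g/b)^(p+1) * (p.factorial:ℝ) / myD n
            * ((2:ℝ)^(((m:ℤ)-1)*((p:ℤ)+1)) * 2^((n*(m-p) : ℕ) : ℤ)) := by rw [hexp]
        _ = (p.factorial:ℝ) * (g/b)^(p+1) * (2:ℝ)^(((m:ℤ)-1)*((p:ℤ)+1))
            * ((-1:ℝ)^n * 2^((n*(m-p) : ℕ) : ℤ) / myD n) := by ring
    have habs : ∀ n : ℕ, |c n| * ((1/(L n))^(p+1) * (p.factorial:ℝ))
        = C * |myA ((2:ℝ)^(r+1)) n| := by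
      intro n
      have h0 : (0:ℝ) ≤ (1/(L n))^(p+1) * (p.factorial:ℝ) := by positivity
      calc |c n| * ((1/(L n))^(p+1) * (p.factorial:ℝ))
          = |c n * ((1/(L n))^(p+1) * (p.factorial:ℝ))| := by rw [abs_mul, abs_of_nonneg h0]
        _ = |C * myA ((2:ℝ)^(r+1)) n| := by rw [hterm n]
        _ = C * |myA ((2:ℝ)^(r+1)) n| := by rw [abs_mul, abs_of_pos hC]
    have hSum : Summable (fun n => ∫ x in Ioi (0:ℝ), ‖G n x‖) := by
      simp only [hnorm, habs]
      exact (summable_myA ((2:ℝ)^(r+1))).abs.mul_left C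
    have hswap := MeasureTheory.integral_tsum_of_summable_integral_norm hInt hSum
    have hfx : ∀ x : ℝ, x ^ p * f x = ∑' n, G n x := by
      intro x
      simp only [hGdef]
      rw [hf x]
      exact (tsum_mul_left).symm
    calc ∫ x in Ioi (0:ℝ), x ^ p * f x
        = ∫ x in Ioi (0:ℝ), ∑' n, G n x := by simp only [hfx]
      _ = ∑' n, ∫ x in Ioi (0:ℝ), G n x := hswap.symm
      _ = ∑' n, C * myA ((2:ℝ)^(r+1)) n := by simp only [hval, hterm]
      _ = C * ∑' n, myA ((2:ℝ)^(r+1)) n := tsum_mul_left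
      _ = 0 := by rw [tsum_myA_zero r, mul_zero]
end

section
/- Suppose a semigroup estimate ‖S_t u_0 − Σ_{m=0}^{M} e^{λ_m t}⟨ψ_m, u_0⟩ f_m‖ ≤ C e^{at}‖u_0‖ holds for all t ≥ 0 and all u_0, where a < λ_ℓ for each ℓ ≤ M, and ⟨φ_ℓ, f_m⟩ = δ_{ℓm} with S_t^* φ_ℓ = e^{λ_ℓ t} φ_ℓ. Then ⟨ψ_ℓ, u_0⟩ = ⟨φ_ℓ, u_0⟩ for every u_0 and every ℓ ≤ M, i.e. ψ_ℓ = φ_ℓ as functionals. -/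
/-- Identification of the spectral projectors: if the semigroup estimate
`‖S_t u₀ − Σ_m e^(λ_m t) ⟨ψ_m, u₀⟩ f_m‖ ≤ C e^(a t) ‖u₀‖` holds with `a < λ_ℓ`,
`⟨φ_ℓ, f_m⟩ = δ_(ℓ m)` and `⟨φ_ℓ, S_t u₀⟩ = e^(λ_ℓ t) ⟨φ_ℓ, u₀⟩`, then `ψ_ℓ = φ_ℓ`. -/
theorem stmt_16 (X : Type*) [NormedAddCommGroup X] [NormedSpace ℝ X] [CompleteSpace X]
    (M : ℕ) (S : ℝ → X →L[ℝ] X)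
    (f : Fin (M + 1) → X) (φ ψ : Fin (M + 1) → X →L[ℝ] ℝ)
    (lam : Fin (M + 1) → ℝ) (a C : ℝ)
    (hlam : ∀ ℓ, a < lam ℓ)
    (hbio : ∀ ℓ m, φ ℓ (f m) = if ℓ = m then 1 else 0)
    (hcov : ∀ ℓ, ∀ t ≥ (0 : ℝ), ∀ u₀ : X,
      φ ℓ (S t u₀) = Real.exp (lam ℓ * t) * φ ℓ u₀)
    (hest : ∀ t ≥ (0 : ℝ), ∀ u₀ : X,
      ‖S t u₀ - ∑ m, Real.exp (lam m * t) • ψ m u₀ • f m‖ ≤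
        C * Real.exp (a * t) * ‖u₀‖) :
    ∀ ℓ, ∀ u₀ : X, ψ ℓ u₀ = φ ℓ u₀ := by
  intro ℓ u₀
  set d : ℝ := φ ℓ u₀ - ψ ℓ u₀ with hd
  -- key bound: for all t ≥ 0, |d| ≤ K * exp ((a - lam ℓ) * t)
  set K : ℝ := ‖φ ℓ‖ * (C * ‖u₀‖) with hK
  have key : ∀ t ≥ (0 : ℝ), |d| ≤ K * Real.exp ((a - lam ℓ) * t) := by
    intro t ht
    have hφsum : φ ℓ (∑ m, Real.exp (lam m * t) • ψ m u₀ • f m)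
        = Real.exp (lam ℓ * t) * ψ ℓ u₀ := by
      rw [map_sum]
      rw [Finset.sum_eq_single ℓ]
      · simp [hbio ℓ ℓ]
      · intro m _ hm
        simp [hbio ℓ m, hm.symm]
      · simp
    have h1 : φ ℓ (S t u₀ - ∑ m, Real.exp (lam m * t) • ψ m u₀ • f m)
        = Real.exp (lam ℓ * t) * d := by
      rw [map_sub, hφsum, hcov ℓ t ht u₀, hd]; ring
    have h2 : |Real.exp (lam ℓ * t) * d| ≤ ‖φ ℓ‖ * (C * Real.exp (a * t) * ‖u₀‖) := by
      rw [← h1]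
      calc |φ ℓ (S t u₀ - ∑ m, Real.exp (lam m * t) • ψ m u₀ • f m)|
          ≤ ‖φ ℓ‖ * ‖S t u₀ - ∑ m, Real.exp (lam m * t) • ψ m u₀ • f m‖ :=
            (φ ℓ).le_opNorm _
        _ ≤ ‖φ ℓ‖ * (C * Real.exp (a * t) * ‖u₀‖) := by
            exact mul_le_mul_of_nonneg_left (hest t ht u₀) (norm_nonneg _)
    have hpos : (0:ℝ) < Real.exp (lam ℓ * t) := Real.exp_pos _
    rw [abs_mul, abs_of_pos hpos] at h2
    have : |d| ≤ ‖φ ℓ‖ * (C * Real.exp (a * t) * ‖u₀‖) / Real.exp (lam ℓ * t) :=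
      (le_div_iff₀ hpos).mpr (by linarith [h2])
    calc |d| ≤ ‖φ ℓ‖ * (C * Real.exp (a * t) * ‖u₀‖) / Real.exp (lam ℓ * t) := this
      _ = K * Real.exp ((a - lam ℓ) * t) := by
          rw [hK, sub_mul, Real.exp_sub, div_eq_mul_inv]
          field_simp
  -- the bound tends to 0
  have hlim : Filter.Tendsto (fun t : ℝ => K * Real.exp ((a - lam ℓ) * t))
      Filter.atTop (nhds 0) := by
    have : Filter.Tendsto (fun t : ℝ => Real.exp ((a - lam ℓ) * t))
        Filter.atTop (nhds 0) := by
      apply Real.tendsto_exp_atBot.comp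
      apply Filter.Tendsto.const_mul_atTop_of_neg (by linarith [hlam ℓ]) Filter.tendsto_id
    simpa using this.const_mul K
  have : |d| ≤ 0 := by
    apply ge_of_tendsto hlim
    filter_upwards [Filter.eventually_ge_atTop (0:ℝ)] with t ht using key t ht
  have : d = 0 := abs_eq_zero.mp (le_antisymm this (abs_nonneg d))
  rw [hd] at this
  linarith
end

section
/- The function f_m(x) = Σ_{n≥0} c_n exp(-(b/g)·2^{n+1-m}·x), with c_n = (-1)^n 2^{n(m+1)}/∏_{j=1}^n(2^j-1), satisfies f_m(0) = 0 for every m ≥ 0; i.e., Σ_{n≥0} (-1)^n · 2^{n(m+1)} / ∏_{j=1}^n (2^j - 1) = 0. -/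
noncomputable def Pden (n : ℕ) : ℝ := ∏ j ∈ Finset.Icc 1 n, ((2 : ℝ) ^ j - 1)

noncomputable def aa (q : ℝ) (n : ℕ) : ℝ := (-1 : ℝ) ^ n * q ^ n / Pden n

lemma Pden_pos (n : ℕ) : 0 < Pden n := by
  apply Finset.prod_pos
  intro j hj
  simp only [Finset.mem_Icc] at hj
  have h : (2:ℝ)^1 ≤ 2^j := pow_le_pow_right₀ (by norm_num) hj.1
  simp at h; linarith

lemma Pden_succ (n : ℕ) : Pden (n+1) = Pden n * ((2:ℝ)^(n+1) - 1) := by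
  unfold Pden
  rw [Finset.prod_Icc_succ_top (by omega)]

lemma aa_summable (q : ℝ) : Summable (aa q) := by
  obtain ⟨N, hN⟩ := pow_unbounded_of_one_lt (2 * |q|) (by norm_num : (1:ℝ) < 2)
  apply summable_of_ratio_norm_eventually_le (r := 1/2) (by norm_num)
  filter_upwards [Filter.eventually_ge_atTop N] with n hn
  have h2 : (2:ℝ)^N ≤ 2^n := pow_le_pow_right₀ (by norm_num) hn
  have h1 : (1:ℝ) ≤ 2^n := one_le_pow₀ (by norm_num)
  have hq : 2 * |q| ≤ (2:ℝ)^(n+1) - 1 := by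
    rw [pow_succ]; nlinarith
  have hpos := Pden_pos n
  have hfac : (0:ℝ) < 2^(n+1) - 1 := by rw [pow_succ]; nlinarith
  have hnorm : ∀ r : ℝ, ∀ k : ℕ, ‖aa r k‖ = |r|^k / Pden k := by
    intro r k
    rw [Real.norm_eq_abs]
    unfold aa
    rw [abs_div, abs_mul, abs_pow, abs_pow, abs_neg, abs_one, one_pow, one_mul,
      abs_of_pos (Pden_pos k)]
  rw [hnorm, hnorm, Pden_succ, pow_succ, div_le_iff₀ (by positivity)]
  calc |q|^n * |q| ≤ |q|^n * ((2^(n+1)-1)/2) := by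
        apply mul_le_mul_of_nonneg_left _ (by positivity)
        linarith
    _ = 1/2 * (|q|^n / Pden n) * (Pden n * (2^(n+1)-1)) := by
        field_simp

lemma aa_feq (q : ℝ) : ∑' n, aa (2*q) n = (1 - q) * ∑' n, aa q n := by
  have hs := aa_summable q
  have hs2 := aa_summable (2*q)
  set gfun : ℕ → ℝ := fun n => aa (2*q) n - aa q n with hg
  have hgs : Summable gfun := hs2.sub hs
  have hg0 : gfun 0 = 0 := by simp [gfun, aa]
  have hgsucc : ∀ n, gfun (n+1) = -q * aa q n := by
    intro n
    have hpos := Pden_pos n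
    have h2 : ((2:ℝ)^(n+1) - 1) ≠ 0 := by
      have : (1:ℝ) ≤ 2^n := one_le_pow₀ (by norm_num)
      rw [pow_succ]; nlinarith
    have hP : Pden n ≠ 0 := hpos.ne'
    simp only [gfun, aa, Pden_succ, mul_pow]
    field_simp
    ring
  have key : ∑' n, gfun n = -q * ∑' n, aa q n := by
    rw [Summable.tsum_eq_zero_add hgs, hg0, zero_add]
    rw [tsum_congr hgsucc, tsum_mul_left]
  have : ∑' n, aa (2*q) n - ∑' n, aa q n = ∑' n, gfun n := (Summable.tsum_sub hs2 hs).symm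
  linarith [this, key]

lemma aa_zero (m : ℕ) : ∑' n, aa ((2:ℝ)^(m+1)) n = 0 := by
  induction m with
  | zero =>
      have := aa_feq 1
      simpa using this
  | succ k ih =>
      have := aa_feq ((2:ℝ)^(k+1))
      rw [ih, mul_zero] at this
      have h : (2:ℝ)^(k+1+1) = 2 * 2^(k+1) := by ring
      rw [h, this]

/-- Zero flux boundary condition: `f_m(0) = 0`, i.e.
`Σ_{n≥0} (-1)^n 2^(n(m+1)) / ∏_{j=1}^n (2^j - 1) = 0` for every `m ≥ 0`. -/
theorem stmt_19 (g b : ℝ) (hg : 0 < g) (hb : 0 < b) (m : ℕ)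
    (c : ℕ → ℝ)
    (hc : ∀ n : ℕ, c n = (-1 : ℝ) ^ n * 2 ^ (n * (m + 1)) /
      ∏ j ∈ Finset.Icc 1 n, ((2 : ℝ) ^ j - 1))
    (f : ℝ → ℝ)
    (hf : ∀ x : ℝ, f x = ∑' n : ℕ,
      c n * Real.exp (-(b / g) * (2 : ℝ) ^ ((n : ℤ) + 1 - (m : ℤ)) * x)) :
    f 0 = 0 ∧
      (∑' n : ℕ, (-1 : ℝ) ^ n * 2 ^ (n * (m + 1)) /
        ∏ j ∈ Finset.Icc 1 n, ((2 : ℝ) ^ j - 1)) = 0 := by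
  have hca : ∀ n, (-1 : ℝ) ^ n * 2 ^ (n * (m + 1)) /
      ∏ j ∈ Finset.Icc 1 n, ((2 : ℝ) ^ j - 1) = aa ((2:ℝ)^(m+1)) n := by
    intro n
    unfold aa Pden
    rw [mul_comm n (m+1), pow_mul]
  have hsum : (∑' n : ℕ, (-1 : ℝ) ^ n * 2 ^ (n * (m + 1)) /
      ∏ j ∈ Finset.Icc 1 n, ((2 : ℝ) ^ j - 1)) = 0 := by
    rw [tsum_congr hca]; exact aa_zero m
  refine ⟨?_, hsum⟩
  rw [hf 0]
  have : ∀ n : ℕ, c n * Real.exp (-(b / g) * (2 : ℝ) ^ ((n : ℤ) + 1 - (m : ℤ)) * 0)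
      = (-1 : ℝ) ^ n * 2 ^ (n * (m + 1)) / ∏ j ∈ Finset.Icc 1 n, ((2 : ℝ) ^ j - 1) := by
    intro n
    rw [mul_zero, Real.exp_zero, mul_one, hc n]
  rw [tsum_congr this, hsum]
end
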